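/- arXiv:2405.15358 — 3 statements merged into one kernel-verified Lean document; each statement's English description precedes it below -/
import Mathlib

section
/- Let G be a directed acyclic graph on a finite vertex set V and let T be a set of target vertices with N = ∪_{t∈T} NB_t. Then the mixed graph G*_N is ancestral: it contains no directed cycles and no almost directed cycles. -/
open Filter MeasureTheory ProbabilityTheory

universe u

/-- A mixed graph: each ordered pair of vertices may carry a directed edge `dir i j`
(drawn `i → j`) or a bidirected edge `bidir i j` (drawn `i ↔ j`). -/
structure MixedGraph (V : Type u) where
  dir : V → V → Prop
  bidir : V → V → Prop

namespace MixedGraph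

variable {V : Type u}

/-- There is a bidirected edge between `i` and `j` (symmetrized). -/
def Bidir (G : MixedGraph V) (i j : V) : Prop := G.bidir i j ∨ G.bidir j i

/-- `i` and `j` are adjacent: joined by some edge. -/
def Adj (G : MixedGraph V) (i j : V) : Prop := G.dir i j ∨ G.dir j i ∨ G.Bidir i j

/-- The edge between `a` and `k` has an arrowhead at `k`. -/
def ArrowAt (G : MixedGraph V) (a k : V) : Prop := G.dir a k ∨ G.Bidir a k

/-- `i` is an ancestor of `j`: `i = j` or there is a directed path from `i` to `j`. -/
def Ancestor (G : MixedGraph V) (i j : V) : Prop := Relation.ReflTransGen G.dir i j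

/-- `G` contains a directed cycle: an edge `i → j` with `j` an ancestor of `i`. -/
def DirectedCycle (G : MixedGraph V) : Prop := ∃ i j, G.dir i j ∧ G.Ancestor j i

/-- `G` contains an almost directed cycle: an edge `i ↔ j` with `j` an ancestor of `i`. -/
def AlmostDirectedCycle (G : MixedGraph V) : Prop := ∃ i j, G.Bidir i j ∧ G.Ancestor j i

/-- `G` is ancestral: no directed cycles and no almost directed cycles. -/
def Ancestral (G : MixedGraph V) : Prop := ¬ G.DirectedCycle ∧ ¬ G.AlmostDirectedCycle

/-- The graph is a well-formed mixed graph: no self-loops and at most one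
edge between any pair of distinct vertices. -/
def WellFormed (G : MixedGraph V) : Prop :=
  (∀ i, ¬ G.dir i i) ∧ (∀ i, ¬ G.bidir i i) ∧
  (∀ i j, G.dir i j → ¬ G.dir j i) ∧ ∀ i j, G.dir i j → ¬ G.Bidir i j

/-- A path: a list of at least two distinct vertices, consecutive ones adjacent. -/
def IsPath (G : MixedGraph V) (π : List V) : Prop :=
  π.Chain' G.Adj ∧ π.Nodup ∧ 2 ≤ π.length

/-- A path between `i` and `j`. -/
def IsPathBetween (G : MixedGraph V) (π : List V) (i j : V) : Prop :=
  G.IsPath π ∧ π.head? = some i ∧ π.getLast? = some j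

/-- `k`, with neighbours `a` and `b` on a path, is a collider: both incident
edges of the path have an arrowhead at `k`. -/
def ColliderTriple (G : MixedGraph V) (a k b : V) : Prop := G.ArrowAt a k ∧ G.ArrowAt b k

/-- `π` is an inducing path between `i` and `j` relative to `L`: every vertex on `π`
other than `i`, `j` and members of `L` is a collider on `π` and an ancestor of `i` or `j`. -/
def IsInducingPathRel (G : MixedGraph V) (L : Set V) (i j : V) (π : List V) : Prop :=
  G.IsPathBetween π i j ∧
  ∀ m a k b, π[m]? = some a → π[m+1]? = some k → π[m+2]? = some b → k ∉ L →
    G.ColliderTriple a k b ∧ (G.Ancestor k i ∨ G.Ancestor k j)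

/-- An inducing path (relative to the empty set). -/
def IsInducingPath (G : MixedGraph V) (i j : V) (π : List V) : Prop :=
  G.IsInducingPathRel ∅ i j π

/-- `π` is m-connecting between `i` and `j` given `S`: every collider on `π` is an
ancestor of some member of `S`, and every non-collider is outside `S`. -/
def MConnecting (G : MixedGraph V) (S : Set V) (i j : V) (π : List V) : Prop :=
  G.IsPathBetween π i j ∧
  ∀ m a k b, π[m]? = some a → π[m+1]? = some k → π[m+2]? = some b →
    (G.ColliderTriple a k b → ∃ d ∈ S, G.Ancestor k d) ∧
    (¬ G.ColliderTriple a k b → k ∉ S)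

/-- `S` m-separates `i` and `j` in `G` (for a DAG this is d-separation). -/
def MSep (G : MixedGraph V) (S : Set V) (i j : V) : Prop :=
  ∀ π : List V, ¬ G.MConnecting S i j π

/-- `G` is a DAG: all edges are directed and there are no directed cycles. -/
def IsDAG (G : MixedGraph V) : Prop :=
  (∀ i j, ¬ G.bidir i j) ∧ ∀ i j, G.dir i j → ¬ G.Ancestor j i

/-- Maximality: no inducing path between non-adjacent vertices. -/
def MaximalAG (G : MixedGraph V) : Prop :=
  ∀ i j, i ≠ j → ¬ G.Adj i j → ∀ π, ¬ G.IsInducingPath i j π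

/-- `G` is a maximal ancestral graph. -/
def IsMAG (G : MixedGraph V) : Prop := G.Ancestral ∧ G.MaximalAG

/-- Parents. -/
def pa (G : MixedGraph V) (i : V) : Set V := {j | G.dir j i}
/-- Children. -/
def ch (G : MixedGraph V) (i : V) : Set V := {j | G.dir i j}
/-- Spouses: non-adjacent vertices sharing a child with `i`. -/
def spo (G : MixedGraph V) (i : V) : Set V :=
  {j | j ≠ i ∧ ¬ G.Adj i j ∧ ∃ c, G.dir i c ∧ G.dir j c}
/-- Markov blanket. -/
def mb (G : MixedGraph V) (i : V) : Set V := G.pa i ∪ G.ch i ∪ G.spo i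
/-- Neighborhood of a target node. -/
def NB (G : MixedGraph V) (t : V) : Set V := G.mb t ∪ {t}

variable (G : MixedGraph V) (T : Set V)

/-- `N`: the union of the target neighborhoods. -/
def Nset : Set V := ⋃ t ∈ T, G.NB t

/-- `L = V ∖ N`: the (graphically) latent vertices. -/
def Lset : Set V := (Nset G T)ᶜ

/-- `(i,j) ∈ B`: a between-neighborhood pair, i.e. a pair of vertices of `N` not
belonging to any common target neighborhood. -/
def BetweenPair (i j : V) : Prop :=
  i ∈ Nset G T ∧ j ∈ Nset G T ∧ ∀ t ∈ T, ¬ (i ∈ G.NB t ∧ j ∈ G.NB t)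

/-- `i` and `j` are joined in `G` by an inducing path relative to `L`. -/
def IndConn (i j : V) : Prop :=
  ∃ π, G.IsInducingPathRel (Lset G T) i j π ∨ G.IsInducingPathRel (Lset G T) j i π

/-- The graph `G*_N`: the induced subgraph of `G` on `N`, plus, for each
between-neighborhood pair joined in `G` by an inducing path relative to `L`,
an added edge oriented `i → j` if `i ∈ an_G(j)`, `j → i` if `j ∈ an_G(i)`,
and `i ↔ j` otherwise. -/
def GStar : MixedGraph V where
  dir i j := (i ∈ Nset G T ∧ j ∈ Nset G T ∧ G.dir i j) ∨
    (BetweenPair G T i j ∧ IndConn G T i j ∧ G.Ancestor i j)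
  bidir i j := BetweenPair G T i j ∧ IndConn G T i j ∧
    ¬ G.Ancestor i j ∧ ¬ G.Ancestor j i

/-- Assumption 1: there is no inducing path relative to `L` between two nodes of the
same neighborhood `NB_t` on which some intermediate node lies in `N ∖ NB_t`. -/
def Assumption1 : Prop :=
  ∀ t ∈ T, ∀ i ∈ G.NB t, ∀ j ∈ G.NB t, ∀ π : List V,
    G.IsInducingPathRel (Lset G T) i j π →
    ∀ m k, m + 2 < π.length → π[m+1]? = some k → k ∈ Nset G T → k ∈ G.NB t

/-- The marginal MAG `M(G, N)`: distinct `i, j ∈ N` are adjacent iff joined in `G` by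
an inducing path relative to `L`, oriented by ancestry in `G`. -/
def MarginalMAG : MixedGraph V where
  dir i j := i ∈ Nset G T ∧ j ∈ Nset G T ∧ i ≠ j ∧ IndConn G T i j ∧ G.Ancestor i j
  bidir i j := i ∈ Nset G T ∧ j ∈ Nset G T ∧ i ≠ j ∧ IndConn G T i j ∧
    ¬ G.Ancestor i j ∧ ¬ G.Ancestor j i

end MixedGraph

section Statements

open MixedGraph Filter MeasureTheory ProbabilityTheory

lemma gstar_dir_anc {V : Type u} (G : MixedGraph V) (T : Set V) {i j : V}
    (h : (GStar G T).dir i j) : G.Ancestor i j := by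
  rcases h with ⟨_, _, h⟩ | ⟨_, _, h⟩
  · exact Relation.ReflTransGen.single h
  · exact h

lemma gstar_anc_anc {V : Type u} (G : MixedGraph V) (T : Set V) {i j : V}
    (h : (GStar G T).Ancestor i j) : G.Ancestor i j := by
  induction h with
  | refl => exact Relation.ReflTransGen.refl
  | tail _ hd ih => exact ih.trans (gstar_dir_anc G T hd)

lemma dag_anc_antisymm {V : Type u} {G : MixedGraph V} (hG : G.IsDAG) {i j : V}
    (h1 : G.Ancestor i j) (h2 : G.Ancestor j i) : i = j := by
  rcases h1.cases_head with rfl | ⟨k, hik, hkj⟩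
  · rfl
  · exact absurd (hkj.trans h2) (hG.2 i k hik)

/-- `G*_N` is ancestral. -/
theorem stmt1 {V : Type u} [Fintype V] (G : MixedGraph V) (hG : G.IsDAG)
    (T : Set V) :
    (GStar G T).Ancestral := by
  constructor
  · rintro ⟨i, j, hdir, hanc⟩
    have hij : i = j :=
      dag_anc_antisymm hG (gstar_dir_anc G T hdir) (gstar_anc_anc G T hanc)
    subst hij
    rcases hdir with ⟨_, _, h⟩ | ⟨⟨hN, _, hB⟩, _, _⟩
    · exact hG.2 i i h Relation.ReflTransGen.refl
    · rcases Set.mem_iUnion₂.mp hN with ⟨t, ht, hit⟩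
      exact hB t ht ⟨hit, hit⟩
  · rintro ⟨i, j, hbi, hanc⟩
    have hji : G.Ancestor j i := gstar_anc_anc G T hanc
    rcases hbi with ⟨_, _, _, h⟩ | ⟨_, _, h, _⟩ <;> exact h hji

end Statements
end

section
/- Let M be an ancestral mixed graph and let π be an inducing path between distinct vertices α and ω in M with at least one intermediate vertex. Then every edge of π joining two intermediate vertices is bidirected, both edges of π incident to any intermediate vertex have an arrowhead at that vertex, and at least one of the two terminal edges of π has an arrowhead at its endpoint (i.e., the edge of π at α has an arrowhead at α, or the edge of π at ω has an arrowhead at ω). -/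
open Filter MeasureTheory ProbabilityTheory

universe u

section Statements

open MixedGraph Filter MeasureTheory ProbabilityTheory


namespace MixedGraph

lemma bidir_of_arrowAt' {V : Type u} {G : MixedGraph V} (hwf : G.WellFormed) {a b : V}
    (h1 : G.ArrowAt a b) (h2 : G.ArrowAt b a) : G.Bidir a b := by
  rcases h1 with h1 | h1
  · rcases h2 with h2 | h2
    · exact absurd h1 (hwf.2.2.1 b a h2)
    · exact absurd (or_comm.mp h2) (hwf.2.2.2 a b h1)
  · exact h1

lemma dir_of_adj_not_arrow' {V : Type u} {G : MixedGraph V} {x y : V} (hadj : G.Adj x y)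
    (hna : ¬ G.ArrowAt y x) : G.dir x y := by
  rcases hadj with h | h | h
  · exact h
  · exact absurd (Or.inl h) hna
  · exact absurd (Or.inr (or_comm.mp h)) hna

lemma adj_symm' {V : Type u} {G : MixedGraph V} {x y : V} (h : G.Adj x y) : G.Adj y x := by
  rcases h with h | h | h
  · exact Or.inr (Or.inl h)
  · exact Or.inl h
  · exact Or.inr (Or.inr (or_comm.mp h))

lemma adj_of_consec' {V : Type u} {G : MixedGraph V} {π : List V} (h : π.Chain' G.Adj)
    {i : ℕ} {x y : V} (hx : π[i]? = some x) (hy : π[i+1]? = some y) : G.Adj x y := by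
  rw [List.getElem?_eq_some_iff] at hx hy
  obtain ⟨hi, rfl⟩ := hx
  obtain ⟨hi1, rfl⟩ := hy
  exact List.isChain_iff_getElem.mp h i (by omega)

end MixedGraph

theorem stmt5 {V : Type u} [Fintype V] (M : MixedGraph V)
    (hwf : M.WellFormed) (hanc : M.Ancestral) (α ω : V) (hne : α ≠ ω)
    (π : List V) (hπ : M.IsInducingPath α ω π) (hlen : 3 ≤ π.length) :
    (∀ m a b, m + 4 ≤ π.length → π[m+1]? = some a → π[m+2]? = some b →
      M.Bidir a b) ∧
    (∀ m a k b, π[m]? = some a → π[m+1]? = some k → π[m+2]? = some b →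
      M.ColliderTriple a k b) ∧
    ((∃ a, π[1]? = some a ∧ M.ArrowAt a α) ∨
     (∃ b, π[π.length - 2]? = some b ∧ M.ArrowAt b ω)) := by
  obtain ⟨⟨⟨hchain, hnodup, hlen2⟩, hhead, hlast⟩, hind⟩ := hπ
  have hsome : ∀ i, i < π.length → ∃ x, π[i]? = some x := by
    intro i hi
    exact ⟨_, List.getElem?_eq_getElem hi⟩
  have part1 : ∀ m a b, m + 4 ≤ π.length → π[m+1]? = some a → π[m+2]? = some b →
      M.Bidir a b := by
    intro m a b hm4 ha hb
    obtain ⟨x, hx⟩ := hsome m (by omega)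
    obtain ⟨y, hy⟩ := hsome (m+3) (by omega)
    have hy' : π[m+1+2]? = some y := by
      rw [show m+1+2 = m+3 from by omega]; exact hy
    have t1 := (hind m x a b hx ha hb (Set.notMem_empty a)).1
    have t2 := (hind (m+1) a b y ha hb hy' (Set.notMem_empty b)).1
    exact MixedGraph.bidir_of_arrowAt' hwf t2.1 t1.2
  have part2 : ∀ m a k b, π[m]? = some a → π[m+1]? = some k → π[m+2]? = some b →
      M.ColliderTriple a k b := by
    intro m a k b h1 h2 h3
    exact (hind m a k b h1 h2 h3 (Set.notMem_empty k)).1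
  refine ⟨part1, part2, ?_⟩
  by_contra hcon
  push_neg at hcon
  obtain ⟨h1, h2⟩ := hcon
  obtain ⟨m, hm⟩ : ∃ m, π.length = m + 3 := ⟨π.length - 3, by omega⟩
  have h0 : π[0]? = some α := (List.head?_eq_getElem? (l := π)).symm.trans hhead
  have hΩ : π[m+2]? = some ω := by
    have := (List.getLast?_eq_getElem? (l := π)).symm.trans hlast
    rwa [show π.length - 1 = m + 2 from by omega] at this
  obtain ⟨a, hA⟩ := hsome 1 (by omega)
  obtain ⟨b, hB⟩ := hsome (m+1) (by omega)
  -- the first edge is α → a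
  have hdirα : M.dir α a := by
    have hadj0 : M.Adj α a := MixedGraph.adj_of_consec' hchain h0 hA
    exact MixedGraph.dir_of_adj_not_arrow' hadj0 (h1 a hA)
  -- the last edge is ω → b
  have hdirω : M.dir ω b := by
    have hΩ' : π[(m+1)+1]? = some ω := by
      rw [show m+1+1 = m+2 from by omega]; exact hΩ
    have hadjl : M.Adj b ω := MixedGraph.adj_of_consec' hchain hB hΩ'
    have hna : ¬ M.ArrowAt b ω := by
      apply h2
      rwa [show π.length - 2 = m + 1 from by omega]
    exact MixedGraph.dir_of_adj_not_arrow' (MixedGraph.adj_symm' hadjl) hna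
  -- a is an ancestor of ω
  have anc1 : M.Ancestor a ω := by
    obtain ⟨a2, hA2⟩ := hsome 2 (by omega)
    have := (hind 0 α a a2 h0 hA hA2 (Set.notMem_empty _)).2
    rcases this with h | h
    · exact absurd ⟨α, a, hdirα, h⟩ hanc.1
    · exact h
  -- b is an ancestor of α
  have ancb : M.Ancestor b α := by
    obtain ⟨c', hC'⟩ := hsome m (by omega)
    have := (hind m c' b ω hC' hB hΩ (Set.notMem_empty _)).2
    rcases this with h | h
    · exact h
    · exact absurd ⟨ω, b, hdirω, h⟩ hanc.1
  rcases Nat.eq_zero_or_pos m with hm0 | hm0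
  · subst hm0
    have hab : a = b := by
      have e : (0:ℕ) + 1 = 1 := rfl
      rw [e] at hB
      exact Option.some.inj (hA.symm.trans hB)
    subst hab
    exact absurd ⟨ω, a, hdirω, anc1⟩ hanc.1
  obtain ⟨m', rfl⟩ : ∃ m', m = m' + 1 := ⟨m - 1, by omega⟩
  -- the vertex c before b on the path
  obtain ⟨c, hC⟩ := hsome (m'+1) (by omega)
  have hB' : π[m'+2]? = some b := by
    rwa [show m'+2 = m'+1+1 from by omega]
  -- the edge c – b is bidirected
  have hbid : M.Bidir c b := part1 m' c b (by omega) hC hB'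
  -- c is an ancestor of α or ω
  obtain ⟨cp, hCp⟩ := hsome m' (by omega)
  have ancc : M.Ancestor c α ∨ M.Ancestor c ω :=
    (hind m' cp c b hCp hC hB' (Set.notMem_empty _)).2
  -- hence c is an ancestor of b, giving an almost directed cycle
  have anccb : M.Ancestor c b := by
    have hstep : M.Ancestor ω b := Relation.ReflTransGen.single hdirω
    rcases ancc with h | h
    · exact ((h.tail hdirα).trans anc1).trans hstep
    · exact h.trans hstep
  exact absurd ⟨b, c, or_comm.mp hbid, anccb⟩ hanc.2

end Statements
end

section
/- Let G be a directed acyclic graph on a finite vertex set V, let T be a set of target vertices with N = ∪_{t∈T} NB_t and L = V∖N. Then G*_N is a subgraph of the marginal MAG M(G, N): every pair of vertices adjacent in G*_N is adjacent in M(G, N), and the corresponding edge of M(G, N) carries the same marks (i→j, j→i, or i↔j) as in G*_N. -/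
open Filter MeasureTheory ProbabilityTheory

universe u

section Statements

open MixedGraph Filter MeasureTheory ProbabilityTheory

theorem stmt11 {V : Type u} [Fintype V] (G : MixedGraph V) (hG : G.IsDAG)
    (T : Set V) :
    (∀ i j, (GStar G T).dir i j → (MarginalMAG G T).dir i j) ∧
    (∀ i j, (GStar G T).bidir i j → (MarginalMAG G T).bidir i j) := by
  constructor
  · rintro i j (⟨hi, hj, hd⟩ | ⟨⟨hi, hj, hB⟩, hc, ha⟩)
    · have hne : i ≠ j := by
        rintro rfl; exact hG.2 i i hd Relation.ReflTransGen.refl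
      refine ⟨hi, hj, hne, ⟨[i, j], Or.inl ?_⟩, Relation.ReflTransGen.single hd⟩
      refine ⟨⟨⟨?_, ?_, ?_⟩, rfl, rfl⟩, ?_⟩
      · exact List.isChain_pair.mpr (Or.inl hd)
      · simp [hne]
      · simp
      · intro m a k b h1 h2 h3 _
        have : m + 2 < 2 := by
          by_contra h
          rw [List.getElem?_eq_none (by simp [le_of_not_gt h])] at h3
          cases h3
        omega
    · have hne : i ≠ j := by
        rintro rfl
        obtain ⟨s, hs⟩ := Set.mem_iUnion.mp hi
        obtain ⟨hsT, hmem⟩ := Set.mem_iUnion.mp hs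
        exact hB s hsT ⟨hmem, hmem⟩
      exact ⟨hi, hj, hne, hc, ha⟩
  · rintro i j ⟨⟨hi, hj, hB⟩, hc, ha1, ha2⟩
    have hne : i ≠ j := by
      rintro rfl; exact ha1 Relation.ReflTransGen.refl
    exact ⟨hi, hj, hne, hc, ha1, ha2⟩


end Statements
end
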